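/- arXiv:2206.07677 — 2 statements merged into one kernel-verified Lean document; each statement's English description precedes it below -/
import Mathlib

section
/- For any continuous ℂ^{n×n}-valued potential Q on [−1,1] and matrices Θ± ∈ M_n(ℂ): det N_Θ(λ) = 𝖤_D(λ)/𝖤_Θ(λ) for all λ ∈ ρ(L^Θ), and det M_Θ(λ) = 𝖤_Θ(λ)/𝖤_D(λ) for all λ ∈ ρ(L^D). Consequently, given an auxiliary continuous potential Q̂ and matrices Θ̂±, the function 𝓔(λ) := det N_Θ(λ) · det M̂_{Θ̂}(λ) satisfies 𝓔(λ) = 𝖤_D(λ)·𝖤̂_{Θ̂}(λ) / (𝖤_Θ(λ)·𝖤̂_D(λ)) for all λ ∈ ρ(L^Θ) ∩ ρ(L̂^D). -/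
/-!
Theorem 3.1: for the matrix Schrödinger operator `Lu = -u'' + Qu` on `(-1,1)`
with Robin boundary matrices `Θ± ∈ M_n(ℂ)`, the determinants of the
Robin-to-Dirichlet and Dirichlet-to-Robin matrices are ratios of the Dirichlet
and Robin Evans functions, and consequently
`𝓔(λ) = det N_Θ(λ) · det M̂_{Θ̂}(λ) = 𝖤_D 𝖤̂_{Θ̂} / (𝖤_Θ 𝖤̂_D)`.
The Evans functions are the determinants of the (x-independent) Evans matrices,
written here at `x = 1`.
-/

open Matrix

noncomputable section
namespace Evans

variable {n : ℕ}

/-- `u` (with derivative `u'`) solves `-u'' + Qu = z u` on `ℝ`. -/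
def SolvesODE (Q : ℝ → Matrix (Fin n) (Fin n) ℂ) (z : ℂ)
    (u u' : ℝ → Fin n → ℂ) : Prop :=
  (∀ x : ℝ, HasDerivAt u (u' x) x) ∧
  (∀ x : ℝ, HasDerivAt u' (Q x *ᵥ u x - z • u x) x)

/-- matrix solution of `-Y'' + QY = zY` (each column solves the equation). -/
def SolvesMatODE (Q : ℝ → Matrix (Fin n) (Fin n) ℂ) (z : ℂ)
    (Y Y' : ℝ → Matrix (Fin n) (Fin n) ℂ) : Prop :=
  ∀ j : Fin n, SolvesODE Q z (fun t i => Y t i j) (fun t i => Y' t i j)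

/-- Dirichlet trace `γ_D u = (u(1), u(-1)) ∈ ℂ^{2n}`. -/
def trD (u : ℝ → Fin n → ℂ) : (Fin n ⊕ Fin n) → ℂ := Sum.elim (u 1) (u (-1))

/-- Neumann trace `γ_N u = (u'(1), -u'(-1)) ∈ ℂ^{2n}`. -/
def trN (u' : ℝ → Fin n → ℂ) : (Fin n ⊕ Fin n) → ℂ := Sum.elim (u' 1) (-(u' (-1)))

/-- `z ∈ ρ(𝓛^D)`. -/
def DirichletResolvent (Q : ℝ → Matrix (Fin n) (Fin n) ℂ) : Set ℂ :=
  {z : ℂ | ∀ u u', SolvesODE Q z u u' → trD u = 0 → u = 0}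

/-- `z ∈ ρ(𝓛^Θ)` with `Θ = diag{Θ₊, Θ₋}`. -/
def RobinResolvent (Q : ℝ → Matrix (Fin n) (Fin n) ℂ)
    (Θ : Matrix (Fin n ⊕ Fin n) (Fin n ⊕ Fin n) ℂ) : Set ℂ :=
  {z : ℂ | ∀ u u', SolvesODE Q z u u' → trN u' + Θ *ᵥ trD u = 0 → u = 0}

/-- `M` is the Dirichlet-to-Robin matrix `M_Θ(z)`. -/
def IsDtRmat (Q : ℝ → Matrix (Fin n) (Fin n) ℂ)
    (Θ : Matrix (Fin n ⊕ Fin n) (Fin n ⊕ Fin n) ℂ) (z : ℂ)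
    (M : Matrix (Fin n ⊕ Fin n) (Fin n ⊕ Fin n) ℂ) : Prop :=
  ∀ f : (Fin n ⊕ Fin n) → ℂ, ∃ u u',
    SolvesODE Q z u u' ∧ trD u = f ∧ M *ᵥ f = trN u' + Θ *ᵥ trD u

/-- `N` is the Robin-to-Dirichlet matrix `N_Θ(z)`. -/
def IsRtDmat (Q : ℝ → Matrix (Fin n) (Fin n) ℂ)
    (Θ : Matrix (Fin n ⊕ Fin n) (Fin n ⊕ Fin n) ℂ) (z : ℂ)
    (N : Matrix (Fin n ⊕ Fin n) (Fin n ⊕ Fin n) ℂ) : Prop :=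
  ∀ g : (Fin n ⊕ Fin n) → ℂ, ∃ u u',
    SolvesODE Q z u u' ∧ trN u' + Θ *ᵥ trD u = g ∧ N *ᵥ g = trD u

/-- the Dirichlet Evans function `𝖤_D(λ)`, i.e. the determinant of the Evans
matrix `[Y₋ Y₊; Y₋' Y₊']` (evaluated at `x = 1`). -/
def EvansD (Ym Yp Ym' Yp' : ℝ → Matrix (Fin n) (Fin n) ℂ) : ℂ :=
  (Matrix.fromBlocks (Ym 1) (Yp 1) (Ym' 1) (Yp' 1)).det

/-- the Robin Evans function `𝖤_Θ(λ)` for `W± = V± + Y± Θ±` (at `x = 1`). -/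
def EvansR (Ym Yp Ym' Yp' Vm Vp Vm' Vp' : ℝ → Matrix (Fin n) (Fin n) ℂ)
    (Θp Θm : Matrix (Fin n) (Fin n) ℂ) : ℂ :=
  (Matrix.fromBlocks
    (Vm 1 + Ym 1 * Θm) (Vp 1 + Yp 1 * Θp)
    (Vm' 1 + Ym' 1 * Θm) (Vp' 1 + Yp' 1 * Θp)).det

/-!
Parametrise the solutions of `-u'' + Qu = λu` by their Cauchy data at `-1`:
`U = Y₋ q + V₋ p` has `U'(-1) = q`, `U(-1) = p`. Both traces of `U` are then
linear in `c = (q, p)`, given by explicit block matrices `D` (Dirichlet) and `R` (Robin).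
Unique solvability of the Robin (resp. Dirichlet) problem makes `R` (resp. `D`)
invertible and forces `N_Θ R = D` (resp. `M_Θ D = R`). Finally `det D = det Y₋(1) = 𝖤_D`,
and elementary block operations turn `det R` into `𝖤_Θ`.
-/

theorem _root_.Matrix.det_fromBlocks_neg_one_zero {m R : Type*} [Fintype m] [DecidableEq m]
    [CommRing R] (A B : Matrix m m R) : (fromBlocks A B (-1) 0).det = B.det := by
  have h : fromBlocks A B (-1) 0 = fromBlocks B (-A) 0 (1 : Matrix m m R) * (J m R)ᵀ := by
    simp [J, fromBlocks_transpose, fromBlocks_multiply]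
  rw [h, det_mul, det_transpose, SymplecticGroup.det_eq_one (SymplecticGroup.J_mem m R),
    det_fromBlocks_zero₂₁, det_one, mul_one, mul_one]

theorem _root_.Matrix.det_fromBlocks_zero_neg_one {m R : Type*} [Fintype m] [DecidableEq m]
    [CommRing R] (A C : Matrix m m R) : (fromBlocks A (-1) C 0).det = C.det := by
  rw [← det_transpose, fromBlocks_transpose, transpose_neg, transpose_one, transpose_zero,
    det_fromBlocks_neg_one_zero, det_transpose]

def solutionSubmodule (Q : ℝ → Matrix (Fin n) (Fin n) ℂ) (z : ℂ) :
    Submodule ℂ ((ℝ → Fin n → ℂ) × (ℝ → Fin n → ℂ)) where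
  carrier := {w | SolvesODE Q z w.1 w.2}
  zero_mem' := ⟨fun x => hasDerivAt_const x 0, fun x =>
    (hasDerivAt_const x (0 : Fin n → ℂ)).congr_deriv (by simp [Prod.fst_zero])⟩
  add_mem' {w v} hw hv := ⟨fun x => (hw.1 x).add (hv.1 x), fun x =>
    ((hw.2 x).add (hv.2 x)).congr_deriv
      (by simp only [Prod.fst_add, Pi.add_apply, mulVec_add, smul_add]; abel)⟩
  smul_mem' c w hw := ⟨fun x => (hw.1 x).const_smul c, fun x =>
    ((hw.2 x).const_smul c).congr_deriv
      (by simp only [Prod.smul_fst, Pi.smul_apply, mulVec_smul, smul_sub, smul_comm z c])⟩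

variable {Q : ℝ → Matrix (Fin n) (Fin n) ℂ} {z : ℂ}

lemma solvesODE_zero : SolvesODE Q z 0 0 :=
  (solutionSubmodule Q z).zero_mem

lemma SolvesODE.add {u u' v v' : ℝ → Fin n → ℂ} (hu : SolvesODE Q z u u')
    (hv : SolvesODE Q z v v') : SolvesODE Q z (u + v) (u' + v') :=
  (solutionSubmodule Q z).add_mem (x := (u, u')) (y := (v, v')) hu hv

lemma SolvesODE.sub {u u' v v' : ℝ → Fin n → ℂ} (hu : SolvesODE Q z u u')
    (hv : SolvesODE Q z v v') : SolvesODE Q z (u - v) (u' - v') :=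
  (solutionSubmodule Q z).sub_mem (x := (u, u')) (y := (v, v')) hu hv

lemma SolvesODE.deriv_unique {u u' v' : ℝ → Fin n → ℂ} (hu : SolvesODE Q z u u')
    (hv : SolvesODE Q z u v') : u' = v' :=
  funext fun x => (hu.1 x).unique (hv.1 x)

lemma SolvesMatODE.mulVec {Y Y' : ℝ → Matrix (Fin n) (Fin n) ℂ}
    (hY : SolvesMatODE Q z Y Y') (a : Fin n → ℂ) :
    SolvesODE Q z (fun t => Y t *ᵥ a) (fun t => Y' t *ᵥ a) := by
  have hcols : ((fun t => Y t *ᵥ a), (fun t => Y' t *ᵥ a)) =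
      ∑ j, a j • ((fun t i => Y t i j), (fun t i => Y' t i j)) := by
    ext t i <;> simp [Prod.fst_sum, Prod.snd_sum, Finset.sum_apply, mul_comm] <;> rfl
  have hmem : ((fun t => Y t *ᵥ a), (fun t => Y' t *ᵥ a)) ∈ solutionSubmodule Q z :=
    hcols ▸ (solutionSubmodule Q z).sum_smul_mem a fun j _ => hY j
  exact hmem

lemma trD_sub (u v : ℝ → Fin n → ℂ) : trD (u - v) = trD u - trD v := by
  funext x; cases x <;> rfl

lemma trN_sub (u' v' : ℝ → Fin n → ℂ) : trN (u' - v') = trN u' - trN v' := by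
  funext x; cases x <;> simp [trN, sub_eq_add_neg, add_comm]

lemma eq_of_robinTrace_eq {Θ : Matrix (Fin n ⊕ Fin n) (Fin n ⊕ Fin n) ℂ}
    (hz : z ∈ RobinResolvent Q Θ) {u u' v v' : ℝ → Fin n → ℂ}
    (hu : SolvesODE Q z u u') (hv : SolvesODE Q z v v')
    (h : trN u' + Θ *ᵥ trD u = trN v' + Θ *ᵥ trD v) : u = v := by
  refine sub_eq_zero.1 (hz _ _ (hu.sub hv) ?_)
  rw [trN_sub, trD_sub, mulVec_sub, sub_add_sub_comm, h, sub_self]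

lemma eq_of_trD_eq (hz : z ∈ DirichletResolvent Q) {u u' v v' : ℝ → Fin n → ℂ}
    (hu : SolvesODE Q z u u') (hv : SolvesODE Q z v v') (h : trD u = trD v) : u = v :=
  sub_eq_zero.1 (hz _ _ (hu.sub hv) (by rw [trD_sub, h, sub_self]))

structure IsLeftFundamentalSystem (Q : ℝ → Matrix (Fin n) (Fin n) ℂ) (z : ℂ)
    (Y Y' V V' : ℝ → Matrix (Fin n) (Fin n) ℂ) : Prop where
  solves_Y : SolvesMatODE Q z Y Y'
  solves_V : SolvesMatODE Q z V V'
  Y_neg_one : Y (-1) = 0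
  Y'_neg_one : Y' (-1) = 1
  V_neg_one : V (-1) = 1
  V'_neg_one : V' (-1) = 0

def cauchySolution (Y V : ℝ → Matrix (Fin n) (Fin n) ℂ) (c : Fin n ⊕ Fin n → ℂ) :
    ℝ → Fin n → ℂ :=
  fun t => Y t *ᵥ (c ∘ Sum.inl) + V t *ᵥ (c ∘ Sum.inr)

def dirichletCauchyMatrix (Y V : ℝ → Matrix (Fin n) (Fin n) ℂ) :
    Matrix (Fin n ⊕ Fin n) (Fin n ⊕ Fin n) ℂ :=
  fromBlocks (Y 1) (V 1) 0 1

def robinCauchyMatrix (Y Y' V V' : ℝ → Matrix (Fin n) (Fin n) ℂ)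
    (Θp Θm : Matrix (Fin n) (Fin n) ℂ) : Matrix (Fin n ⊕ Fin n) (Fin n ⊕ Fin n) ℂ :=
  fromBlocks (Y' 1 + Θp * Y 1) (V' 1 + Θp * V 1) (-1) Θm

namespace IsLeftFundamentalSystem

variable {Y Y' V V' : ℝ → Matrix (Fin n) (Fin n) ℂ}

lemma solvesODE_cauchySolution (hF : IsLeftFundamentalSystem Q z Y Y' V V')
    (c : Fin n ⊕ Fin n → ℂ) :
    SolvesODE Q z (cauchySolution Y V c) (cauchySolution Y' V' c) :=
  (hF.solves_Y.mulVec _).add (hF.solves_V.mulVec _)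

lemma trD_cauchySolution (hF : IsLeftFundamentalSystem Q z Y Y' V V')
    (c : Fin n ⊕ Fin n → ℂ) :
    trD (cauchySolution Y V c) = dirichletCauchyMatrix Y V *ᵥ c := by
  funext x
  cases x <;> simp [trD, cauchySolution, dirichletCauchyMatrix, fromBlocks_mulVec,
    hF.Y_neg_one, hF.V_neg_one]

lemma robinTrace_cauchySolution (hF : IsLeftFundamentalSystem Q z Y Y' V V')
    (Θp Θm : Matrix (Fin n) (Fin n) ℂ) (c : Fin n ⊕ Fin n → ℂ) :
    trN (cauchySolution Y' V' c) + fromBlocks Θp 0 0 Θm *ᵥ trD (cauchySolution Y V c) =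
      robinCauchyMatrix Y Y' V V' Θp Θm *ᵥ c := by
  funext x
  cases x <;> simp [trN, trD, cauchySolution, robinCauchyMatrix, fromBlocks_mulVec,
    add_mulVec, mulVec_add, ← mulVec_mulVec, hF.Y_neg_one, hF.V_neg_one, hF.Y'_neg_one,
    hF.V'_neg_one, neg_mulVec]
  ring

lemma eq_zero_of_cauchySolution_eq_zero (hF : IsLeftFundamentalSystem Q z Y Y' V V')
    {c : Fin n ⊕ Fin n → ℂ} (hc : cauchySolution Y V c = 0) : c = 0 := by
  have hsol := hF.solvesODE_cauchySolution c
  rw [hc] at hsol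
  have hc' : cauchySolution Y' V' c = 0 := hsol.deriv_unique solvesODE_zero
  have hinr := congrFun hc (-1)
  have hinl := congrFun hc' (-1)
  simp only [cauchySolution, hF.Y_neg_one, hF.V_neg_one, hF.Y'_neg_one, hF.V'_neg_one,
    zero_mulVec, one_mulVec, zero_add, add_zero, Pi.zero_apply] at hinr hinl
  rw [← Sum.elim_comp_inl_inr c, hinl, hinr, Sum.elim_zero_zero]

lemma isUnit_robinCauchyMatrix (hF : IsLeftFundamentalSystem Q z Y Y' V V')
    {Θp Θm : Matrix (Fin n) (Fin n) ℂ} (hz : z ∈ RobinResolvent Q (fromBlocks Θp 0 0 Θm)) :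
    IsUnit (robinCauchyMatrix Y Y' V V' Θp Θm) := by
  rw [← mulVec_injective_iff_isUnit]
  refine (injective_iff_map_eq_zero (robinCauchyMatrix Y Y' V V' Θp Θm).mulVecLin).2
    fun c hc => hF.eq_zero_of_cauchySolution_eq_zero <|
      hz _ _ (hF.solvesODE_cauchySolution c) ((hF.robinTrace_cauchySolution Θp Θm c).trans hc)

lemma isUnit_dirichletCauchyMatrix (hF : IsLeftFundamentalSystem Q z Y Y' V V')
    (hz : z ∈ DirichletResolvent Q) : IsUnit (dirichletCauchyMatrix Y V) := by
  rw [← mulVec_injective_iff_isUnit]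
  refine (injective_iff_map_eq_zero (dirichletCauchyMatrix Y V).mulVecLin).2
    fun c hc => hF.eq_zero_of_cauchySolution_eq_zero <|
      hz _ _ (hF.solvesODE_cauchySolution c) ((hF.trD_cauchySolution c).trans hc)

lemma rtd_mul_robinCauchyMatrix (hF : IsLeftFundamentalSystem Q z Y Y' V V')
    {Θp Θm : Matrix (Fin n) (Fin n) ℂ} (hz : z ∈ RobinResolvent Q (fromBlocks Θp 0 0 Θm))
    {N : Matrix (Fin n ⊕ Fin n) (Fin n ⊕ Fin n) ℂ}
    (hN : IsRtDmat Q (fromBlocks Θp 0 0 Θm) z N) :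
    N * robinCauchyMatrix Y Y' V V' Θp Θm = dirichletCauchyMatrix Y V := by
  refine ext_iff_mulVec.2 fun c => ?_
  obtain ⟨u, u', hu, hug, hNg⟩ := hN (robinCauchyMatrix Y Y' V V' Θp Θm *ᵥ c)
  have hU := hF.solvesODE_cauchySolution c
  have huU : u = cauchySolution Y V c :=
    eq_of_robinTrace_eq hz hu hU (by rw [hug, hF.robinTrace_cauchySolution])
  rw [← mulVec_mulVec, hNg, huU, hF.trD_cauchySolution]

lemma dtr_mul_dirichletCauchyMatrix (hF : IsLeftFundamentalSystem Q z Y Y' V V')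
    (hz : z ∈ DirichletResolvent Q) {Θp Θm : Matrix (Fin n) (Fin n) ℂ}
    {M : Matrix (Fin n ⊕ Fin n) (Fin n ⊕ Fin n) ℂ}
    (hM : IsDtRmat Q (fromBlocks Θp 0 0 Θm) z M) :
    M * dirichletCauchyMatrix Y V = robinCauchyMatrix Y Y' V V' Θp Θm := by
  refine ext_iff_mulVec.2 fun c => ?_
  obtain ⟨u, u', hu, huf, hMf⟩ := hM (dirichletCauchyMatrix Y V *ᵥ c)
  have hU := hF.solvesODE_cauchySolution c
  have huU : u = cauchySolution Y V c :=
    eq_of_trD_eq hz hu hU (by rw [huf, hF.trD_cauchySolution])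
  subst huU
  rw [← mulVec_mulVec, hMf, hu.deriv_unique hU, hF.robinTrace_cauchySolution]

end IsLeftFundamentalSystem

lemma det_dirichletCauchyMatrix (Y V : ℝ → Matrix (Fin n) (Fin n) ℂ) :
    (dirichletCauchyMatrix Y V).det = (Y 1).det := by
  rw [dirichletCauchyMatrix, det_fromBlocks_zero₂₁, det_one, mul_one]

lemma evansD_eq_det {Ym Yp Ym' Yp' : ℝ → Matrix (Fin n) (Fin n) ℂ}
    (hYp₀ : Yp 1 = 0) (hYp₁ : Yp' 1 = 1) : EvansD Ym Yp Ym' Yp' = (Ym 1).det := by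
  rw [EvansD, hYp₀, hYp₁, det_fromBlocks_zero₁₂, det_one, mul_one]

lemma det_robinCauchyMatrix (Ym Ym' Vm Vm' : ℝ → Matrix (Fin n) (Fin n) ℂ)
    {Yp Yp' Vp Vp' : ℝ → Matrix (Fin n) (Fin n) ℂ}
    (hYp₀ : Yp 1 = 0) (hYp₁ : Yp' 1 = 1) (hVp₀ : Vp 1 = -1) (hVp₁ : Vp' 1 = 0)
    (Θp Θm : Matrix (Fin n) (Fin n) ℂ) :
    (robinCauchyMatrix Ym Ym' Vm Vm' Θp Θm).det =
      EvansR Ym Yp Ym' Yp' Vm Vp Vm' Vp' Θp Θm := by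
  set S := Vm' 1 + Θp * Vm 1 + (Ym' 1 + Θp * Ym 1) * Θm
  have hcols : robinCauchyMatrix Ym Ym' Vm Vm' Θp Θm * fromBlocks 1 Θm 0 1 =
      fromBlocks (Ym' 1 + Θp * Ym 1) S (-1) 0 := by
    simp [robinCauchyMatrix, fromBlocks_multiply, S, add_comm]
  have hrows :
      fromBlocks 1 0 Θp 1 * fromBlocks (Vm 1 + Ym 1 * Θm) (-1) (Vm' 1 + Ym' 1 * Θm) Θp =
        fromBlocks (Vm 1 + Ym 1 * Θm) (-1) S 0 := by
    simp [fromBlocks_multiply, S]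
    noncomm_ring
  calc (robinCauchyMatrix Ym Ym' Vm Vm' Θp Θm).det
      = (robinCauchyMatrix Ym Ym' Vm Vm' Θp Θm * fromBlocks 1 Θm 0 1).det := by
        rw [det_mul, det_fromBlocks_zero₂₁, det_one, mul_one, mul_one]
    _ = S.det := by rw [hcols, det_fromBlocks_neg_one_zero]
    _ = (fromBlocks 1 0 Θp 1 *
          fromBlocks (Vm 1 + Ym 1 * Θm) (-1) (Vm' 1 + Ym' 1 * Θm) Θp).det := by
        rw [hrows, det_fromBlocks_zero_neg_one]
    _ = EvansR Ym Yp Ym' Yp' Vm Vp Vm' Vp' Θp Θm := by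
        rw [det_mul, det_fromBlocks_zero₁₂, det_one, one_mul, one_mul, EvansR, hYp₀, hYp₁,
          hVp₀, hVp₁, zero_mul, add_zero, one_mul, zero_add]

section
variable {Ym Yp Ym' Yp' Vm Vp Vm' Vp' : ℝ → Matrix (Fin n) (Fin n) ℂ}
  {Θp Θm : Matrix (Fin n) (Fin n) ℂ}

lemma IsRtDmat.det_eq {N : Matrix (Fin n ⊕ Fin n) (Fin n ⊕ Fin n) ℂ}
    (hN : IsRtDmat Q (fromBlocks Θp 0 0 Θm) z N)
    (hF : IsLeftFundamentalSystem Q z Ym Ym' Vm Vm')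
    (hYp₀ : Yp 1 = 0) (hYp₁ : Yp' 1 = 1) (hVp₀ : Vp 1 = -1) (hVp₁ : Vp' 1 = 0)
    (hz : z ∈ RobinResolvent Q (fromBlocks Θp 0 0 Θm)) :
    N.det = EvansD Ym Yp Ym' Yp' / EvansR Ym Yp Ym' Yp' Vm Vp Vm' Vp' Θp Θm := by
  have hR := det_robinCauchyMatrix Ym Ym' Vm Vm' hYp₀ hYp₁ hVp₀ hVp₁ Θp Θm
  have hER : EvansR Ym Yp Ym' Yp' Vm Vp Vm' Vp' Θp Θm ≠ 0 :=
    hR ▸ ((isUnit_iff_isUnit_det _).1 (hF.isUnit_robinCauchyMatrix hz)).ne_zero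
  rw [eq_div_iff hER, ← hR, ← det_mul, hF.rtd_mul_robinCauchyMatrix hz hN,
    det_dirichletCauchyMatrix, evansD_eq_det hYp₀ hYp₁]

lemma IsDtRmat.det_eq {M : Matrix (Fin n ⊕ Fin n) (Fin n ⊕ Fin n) ℂ}
    (hM : IsDtRmat Q (fromBlocks Θp 0 0 Θm) z M)
    (hF : IsLeftFundamentalSystem Q z Ym Ym' Vm Vm')
    (hYp₀ : Yp 1 = 0) (hYp₁ : Yp' 1 = 1) (hVp₀ : Vp 1 = -1) (hVp₁ : Vp' 1 = 0)
    (hz : z ∈ DirichletResolvent Q) :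
    M.det = EvansR Ym Yp Ym' Yp' Vm Vp Vm' Vp' Θp Θm / EvansD Ym Yp Ym' Yp' := by
  have hD : (dirichletCauchyMatrix Ym Vm).det = EvansD Ym Yp Ym' Yp' := by
    rw [det_dirichletCauchyMatrix, evansD_eq_det hYp₀ hYp₁]
  have hED : EvansD Ym Yp Ym' Yp' ≠ 0 :=
    hD ▸ ((isUnit_iff_isUnit_det _).1 (hF.isUnit_dirichletCauchyMatrix hz)).ne_zero
  rw [eq_div_iff hED, ← hD, ← det_mul, hF.dtr_mul_dirichletCauchyMatrix hz hM,
    det_robinCauchyMatrix Ym Ym' Vm Vm' hYp₀ hYp₁ hVp₀ hVp₁]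

end

theorem thm_fdEvans_general
    (Q Qhat : ℝ → Matrix (Fin n) (Fin n) ℂ)
    (Θp Θm Θhatp Θhatm : Matrix (Fin n) (Fin n) ℂ)
    -- the fundamental matrix solutions for Q with their boundary conditions
    (Ym Ym' Yp Yp' Vm Vm' Vp Vp' : ℝ → Matrix (Fin n) (Fin n) ℂ) (z : ℂ)
    (hYm : SolvesMatODE Q z Ym Ym')
    (hVm : SolvesMatODE Q z Vm Vm')
    (hYm₀ : Ym (-1) = 0) (hYm₁ : Ym' (-1) = 1)
    (hYp₀ : Yp 1 = 0) (hYp₁ : Yp' 1 = 1)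
    (hVm₀ : Vm (-1) = 1) (hVm₁ : Vm' (-1) = 0)
    (hVp₀ : Vp 1 = -1) (hVp₁ : Vp' 1 = 0)
    -- the fundamental matrix solutions for Q̂
    (Zm Zm' Zp Zp' Wm Wm' Wp Wp' : ℝ → Matrix (Fin n) (Fin n) ℂ)
    (hZm : SolvesMatODE Qhat z Zm Zm')
    (hWm : SolvesMatODE Qhat z Wm Wm')
    (hZm₀ : Zm (-1) = 0) (hZm₁ : Zm' (-1) = 1)
    (hZp₀ : Zp 1 = 0) (hZp₁ : Zp' 1 = 1)
    (hWm₀ : Wm (-1) = 1) (hWm₁ : Wm' (-1) = 0)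
    (hWp₀ : Wp 1 = -1) (hWp₁ : Wp' 1 = 0) :
    -- det N_Θ(λ) = 𝖤_D(λ)/𝖤_Θ(λ) on ρ(𝓛^Θ)
    (z ∈ RobinResolvent Q (Matrix.fromBlocks Θp 0 0 Θm) →
      ∀ N, IsRtDmat Q (Matrix.fromBlocks Θp 0 0 Θm) z N →
        N.det = EvansD Ym Yp Ym' Yp' /
          EvansR Ym Yp Ym' Yp' Vm Vp Vm' Vp' Θp Θm) ∧
    -- det M_Θ(λ) = 𝖤_Θ(λ)/𝖤_D(λ) on ρ(𝓛^D)
    (z ∈ DirichletResolvent Q →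
      ∀ M, IsDtRmat Q (Matrix.fromBlocks Θp 0 0 Θm) z M →
        M.det = EvansR Ym Yp Ym' Yp' Vm Vp Vm' Vp' Θp Θm /
          EvansD Ym Yp Ym' Yp') ∧
    -- 𝓔(λ) = det N_Θ(λ) det M̂_{Θ̂}(λ) = 𝖤_D 𝖤̂_{Θ̂} / (𝖤_Θ 𝖤̂_D)
    (z ∈ RobinResolvent Q (Matrix.fromBlocks Θp 0 0 Θm) →
      z ∈ DirichletResolvent Qhat →
      ∀ N, IsRtDmat Q (Matrix.fromBlocks Θp 0 0 Θm) z N →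
      ∀ Mhat, IsDtRmat Qhat (Matrix.fromBlocks Θhatp 0 0 Θhatm) z Mhat →
        N.det * Mhat.det =
          (EvansD Ym Yp Ym' Yp' * EvansR Zm Zp Zm' Zp' Wm Wp Wm' Wp' Θhatp Θhatm) /
          (EvansR Ym Yp Ym' Yp' Vm Vp Vm' Vp' Θp Θm * EvansD Zm Zp Zm' Zp')) := by
  have hF : IsLeftFundamentalSystem Q z Ym Ym' Vm Vm' := ⟨hYm, hVm, hYm₀, hYm₁, hVm₀, hVm₁⟩
  have hFhat : IsLeftFundamentalSystem Qhat z Zm Zm' Wm Wm' :=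
    ⟨hZm, hWm, hZm₀, hZm₁, hWm₀, hWm₁⟩
  refine ⟨fun hz N hN => hN.det_eq hF hYp₀ hYp₁ hVp₀ hVp₁ hz,
    fun hz M hM => hM.det_eq hF hYp₀ hYp₁ hVp₀ hVp₁ hz,
    fun hz hzhat N hN Mhat hMhat => ?_⟩
  rw [hN.det_eq hF hYp₀ hYp₁ hVp₀ hVp₁ hz, hMhat.det_eq hFhat hZp₀ hZp₁ hWp₀ hWp₁ hzhat,
    div_mul_div_comm]

/-- **Theorem 3.1.** -/
theorem thm_fdEvans
    (Q Qhat : ℝ → Matrix (Fin n) (Fin n) ℂ)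
    (hQ : Continuous Q) (hQhat : Continuous Qhat)
    (Θp Θm Θhatp Θhatm : Matrix (Fin n) (Fin n) ℂ)
    -- the fundamental matrix solutions for Q with their boundary conditions
    (Ym Ym' Yp Yp' Vm Vm' Vp Vp' : ℝ → Matrix (Fin n) (Fin n) ℂ) (z : ℂ)
    (hYm : SolvesMatODE Q z Ym Ym') (hYp : SolvesMatODE Q z Yp Yp')
    (hVm : SolvesMatODE Q z Vm Vm') (hVp : SolvesMatODE Q z Vp Vp')
    (hYm₀ : Ym (-1) = 0) (hYm₁ : Ym' (-1) = 1)
    (hYp₀ : Yp 1 = 0) (hYp₁ : Yp' 1 = 1)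
    (hVm₀ : Vm (-1) = 1) (hVm₁ : Vm' (-1) = 0)
    (hVp₀ : Vp 1 = -1) (hVp₁ : Vp' 1 = 0)
    -- the fundamental matrix solutions for Q̂
    (Zm Zm' Zp Zp' Wm Wm' Wp Wp' : ℝ → Matrix (Fin n) (Fin n) ℂ)
    (hZm : SolvesMatODE Qhat z Zm Zm') (hZp : SolvesMatODE Qhat z Zp Zp')
    (hWm : SolvesMatODE Qhat z Wm Wm') (hWp : SolvesMatODE Qhat z Wp Wp')
    (hZm₀ : Zm (-1) = 0) (hZm₁ : Zm' (-1) = 1)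
    (hZp₀ : Zp 1 = 0) (hZp₁ : Zp' 1 = 1)
    (hWm₀ : Wm (-1) = 1) (hWm₁ : Wm' (-1) = 0)
    (hWp₀ : Wp 1 = -1) (hWp₁ : Wp' 1 = 0) :
    -- det N_Θ(λ) = 𝖤_D(λ)/𝖤_Θ(λ) on ρ(𝓛^Θ)
    (z ∈ RobinResolvent Q (Matrix.fromBlocks Θp 0 0 Θm) →
      ∀ N, IsRtDmat Q (Matrix.fromBlocks Θp 0 0 Θm) z N →
        N.det = EvansD Ym Yp Ym' Yp' /
          EvansR Ym Yp Ym' Yp' Vm Vp Vm' Vp' Θp Θm) ∧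
    -- det M_Θ(λ) = 𝖤_Θ(λ)/𝖤_D(λ) on ρ(𝓛^D)
    (z ∈ DirichletResolvent Q →
      ∀ M, IsDtRmat Q (Matrix.fromBlocks Θp 0 0 Θm) z M →
        M.det = EvansR Ym Yp Ym' Yp' Vm Vp Vm' Vp' Θp Θm /
          EvansD Ym Yp Ym' Yp') ∧
    -- 𝓔(λ) = det N_Θ(λ) det M̂_{Θ̂}(λ) = 𝖤_D 𝖤̂_{Θ̂} / (𝖤_Θ 𝖤̂_D)
    (z ∈ RobinResolvent Q (Matrix.fromBlocks Θp 0 0 Θm) →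
      z ∈ DirichletResolvent Qhat →
      ∀ N, IsRtDmat Q (Matrix.fromBlocks Θp 0 0 Θm) z N →
      ∀ Mhat, IsDtRmat Qhat (Matrix.fromBlocks Θhatp 0 0 Θhatm) z Mhat →
        N.det * Mhat.det =
          (EvansD Ym Yp Ym' Yp' * EvansR Zm Zp Zm' Zp' Wm Wp Wm' Wp' Θhatp Θhatm) /
          (EvansR Ym Yp Ym' Yp' Vm Vp Vm' Vp' Θp Θm * EvansD Zm Zp Zm' Zp')) :=
  thm_fdEvans_general Q Qhat Θp Θm Θhatp Θhatm Ym Ym' Yp Yp' Vm Vm' Vp Vp' z hYm hVm hYm₀ hYm₁ hYp₀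
    hYp₁ hVm₀ hVm₁ hVp₀ hVp₁ Zm Zm' Zp Zp' Wm Wm' Wp Wp' hZm hWm hZm₀ hZm₁ hZp₀ hZp₁ hWm₀ hWm₁ hWp₀
    hWp₁

end Evans
end
end

section
/- Assume Θ₁ satisfies Hypothesis 4.4 and Θ₂ ∈ B(H^{1/2}(∂Ω), H^{−1/2}(∂Ω)). Then: (i) if λ ∈ ρ(L^{Θ₁}), R_{Θ₁,Θ₂}(λ) = I + (Θ₂ − Θ₁)N_{Θ₁}(λ); (ii) if λ ∈ ρ(L^D) ∩ ρ(L^{Θ₁}), M_{Θ₂}(λ) = R_{Θ₁,Θ₂}(λ)M_{Θ₁}(λ). If moreover Θ₂ also satisfies Hypothesis 4.4 and λ ∈ ρ(L^{Θ₁}) ∩ ρ(L^{Θ₂}), then: (iii) N_{Θ₁}(λ) = N_{Θ₂}(λ)R_{Θ₁,Θ₂}(λ); (iv) N_{Θ₁}(λ) − N_{Θ₂}(λ) = N_{Θ₂}(λ)(Θ₂ − Θ₁)N_{Θ₁}(λ); (v) R_{Θ₁,−Θ₂}(λ)R_{Θ₂,Θ₁}(λ) = I − 2Θ₂N_{Θ₂}(λ).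 -/
/-!
Proposition 4.9 (factorization identities between the Robin-to-Dirichlet,
Dirichlet-to-Robin and Robin-to-Robin maps).  The PDE setting is abstracted:
`H1` is `H¹(Ω)`, `Hb = H^{1/2}(∂Ω)`, `Hb' = H^{-1/2}(∂Ω)`, `sol z` is the set
of weak solutions of `Lu = zu`, and the various boundary maps are characterized
by their defining properties.  Hypothesis 4.4 for a boundary operator (the form
`Φ_Θ` being elliptic) enters only through its consequence, unique solvability
of the Robin problem off the spectrum, which is how membership in the resolvent
sets is encoded here.
-/

open Complex Topology Filter Set

noncomputable section
namespace Evans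

variable {Hb Hb' : Type*} [NormedAddCommGroup Hb] [NormedSpace ℂ Hb]
  [NormedAddCommGroup Hb'] [NormedSpace ℂ Hb']
variable {H1 : Type*} [AddCommGroup H1] [Module ℂ H1]

/-- unique solvability of the Robin problem, i.e. `z ∈ ρ(𝓛^Θ)`. -/
def RobinRegular (sol : ℂ → Set H1) (γD : H1 →ₗ[ℂ] Hb) (γN : H1 →ₗ[ℂ] Hb')
    (Θ : Hb →L[ℂ] Hb') (z : ℂ) : Prop :=
  ∀ g : Hb', ∃! u, u ∈ sol z ∧ γN u + Θ (γD u) = g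

/-- unique solvability of the Dirichlet problem, i.e. `z ∈ ρ(𝓛^D)`. -/
def DirichletRegular (sol : ℂ → Set H1) (γD : H1 →ₗ[ℂ] Hb) (z : ℂ) : Prop :=
  ∀ g : Hb, ∃! u, u ∈ sol z ∧ γD u = g

/-- `N` is the Robin-to-Dirichlet map `N_Θ(z)`. -/
def IsRtD (sol : ℂ → Set H1) (γD : H1 →ₗ[ℂ] Hb) (γN : H1 →ₗ[ℂ] Hb')
    (Θ : Hb →L[ℂ] Hb') (N : Hb' →L[ℂ] Hb) (z : ℂ) : Prop :=
  ∀ g : Hb', ∃ u, u ∈ sol z ∧ γN u + Θ (γD u) = g ∧ N g = γD u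

/-- `M` is the Dirichlet-to-Robin map `M_Θ(z)`. -/
def IsDtR (sol : ℂ → Set H1) (γD : H1 →ₗ[ℂ] Hb) (γN : H1 →ₗ[ℂ] Hb')
    (Θ : Hb →L[ℂ] Hb') (M : Hb →L[ℂ] Hb') (z : ℂ) : Prop :=
  ∀ g : Hb, ∃ u, u ∈ sol z ∧ γD u = g ∧ M g = γN u + Θ (γD u)

/-- `R` is the Robin-to-Robin map `R_{Θ₁,Θ₂}(z)`. -/
def IsRtR (sol : ℂ → Set H1) (γD : H1 →ₗ[ℂ] Hb) (γN : H1 →ₗ[ℂ] Hb')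
    (Θ₁ Θ₂ : Hb →L[ℂ] Hb') (R : Hb' →L[ℂ] Hb') (z : ℂ) : Prop :=
  ∀ g : Hb', ∃ u, u ∈ sol z ∧ γN u + Θ₁ (γD u) = g ∧ R g = γN u + Θ₂ (γD u)

/-!
By unique solvability, every element of `Hb'` is the Robin datum `γN u + Θ (γD u)` of exactly
one solution `u`, so two operators on `Hb'` agree once they agree on Robin data of solutions
(likewise for Dirichlet data `γD u` in `Hb`). On such data every map of the proposition is
evaluated by reading off the traces of `u`, and each identity becomes an identity between
`γN u` and `γD u`.
-/

section

variable {sol : ℂ → Set H1} {γD : H1 →ₗ[ℂ] Hb} {γN : H1 →ₗ[ℂ] Hb'} {z : ℂ}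

theorem RobinRegular.ext {F : Type*} [TopologicalSpace F] [AddCommMonoid F] [Module ℂ F]
    {Θ : Hb →L[ℂ] Hb'} (hΘ : RobinRegular sol γD γN Θ z) {A B : Hb' →L[ℂ] F}
    (hAB : ∀ u ∈ sol z, A (γN u + Θ (γD u)) = B (γN u + Θ (γD u))) : A = B := by
  ext g
  obtain ⟨u, ⟨hu, rfl⟩, -⟩ := hΘ g
  exact hAB u hu

theorem DirichletRegular.ext {F : Type*} [TopologicalSpace F] [AddCommMonoid F] [Module ℂ F]
    (hD : DirichletRegular sol γD z) {A B : Hb →L[ℂ] F}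
    (hAB : ∀ u ∈ sol z, A (γD u) = B (γD u)) : A = B := by
  ext g
  obtain ⟨u, ⟨hu, rfl⟩, -⟩ := hD g
  exact hAB u hu

theorem IsRtD.apply_robin_trace {Θ : Hb →L[ℂ] Hb'} {N : Hb' →L[ℂ] Hb}
    (hΘ : RobinRegular sol γD γN Θ z) (hN : IsRtD sol γD γN Θ N z) {u : H1} (hu : u ∈ sol z) :
    N (γN u + Θ (γD u)) = γD u := by
  obtain ⟨v, hv, hgv, hNv⟩ := hN (γN u + Θ (γD u))
  rw [hNv, (hΘ _).unique ⟨hv, hgv⟩ ⟨hu, rfl⟩]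

theorem IsRtR.apply_robin_trace {Θ₁ Θ₂ : Hb →L[ℂ] Hb'} {R : Hb' →L[ℂ] Hb'}
    (hΘ₁ : RobinRegular sol γD γN Θ₁ z) (hR : IsRtR sol γD γN Θ₁ Θ₂ R z) {u : H1}
    (hu : u ∈ sol z) : R (γN u + Θ₁ (γD u)) = γN u + Θ₂ (γD u) := by
  obtain ⟨v, hv, hgv, hRv⟩ := hR (γN u + Θ₁ (γD u))
  rw [hRv, (hΘ₁ _).unique ⟨hv, hgv⟩ ⟨hu, rfl⟩]

theorem IsDtR.apply_dirichlet_trace {Θ : Hb →L[ℂ] Hb'} {M : Hb →L[ℂ] Hb'}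
    (hD : DirichletRegular sol γD z) (hM : IsDtR sol γD γN Θ M z) {u : H1} (hu : u ∈ sol z) :
    M (γD u) = γN u + Θ (γD u) := by
  obtain ⟨v, hv, hgv, hMv⟩ := hM (γD u)
  rw [hMv, (hD _).unique ⟨hv, hgv⟩ ⟨hu, rfl⟩]

end

/-- **Proposition 4.9.** -/
theorem prop_RtoR
    (sol : ℂ → Set H1) (γD : H1 →ₗ[ℂ] Hb) (γN : H1 →ₗ[ℂ] Hb')
    (Θ₁ Θ₂ : Hb →L[ℂ] Hb') (z : ℂ)
    -- λ ∈ ρ(𝓛^{Θ₁}) (Θ₁ satisfies Hypothesis 4.4)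
    (h₁ : RobinRegular sol γD γN Θ₁ z)
    (R12 : Hb' →L[ℂ] Hb') (hR12 : IsRtR sol γD γN Θ₁ Θ₂ R12 z)
    (N1 : Hb' →L[ℂ] Hb) (hN1 : IsRtD sol γD γN Θ₁ N1 z)
    (M1 : Hb →L[ℂ] Hb') (M2 : Hb →L[ℂ] Hb')
    (hM1 : DirichletRegular sol γD z → IsDtR sol γD γN Θ₁ M1 z)
    (hM2 : DirichletRegular sol γD z → IsDtR sol γD γN Θ₂ M2 z)
    (N2 : Hb' →L[ℂ] Hb)
    (hN2 : RobinRegular sol γD γN Θ₂ z → IsRtD sol γD γN Θ₂ N2 z)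
    (R21 : Hb' →L[ℂ] Hb')
    (hR21 : RobinRegular sol γD γN Θ₂ z → IsRtR sol γD γN Θ₂ Θ₁ R21 z)
    (R1m2 : Hb' →L[ℂ] Hb')
    (hR1m2 : IsRtR sol γD γN Θ₁ (-Θ₂) R1m2 z) :
    -- (i)
    (R12 = 1 + (Θ₂ - Θ₁).comp N1) ∧
    -- (ii)
    (DirichletRegular sol γD z → M2 = R12.comp M1) ∧
    -- (iii), (iv), (v): if moreover Θ₂ satisfies Hypothesis 4.4 and
    -- λ ∈ ρ(𝓛^{Θ₁}) ∩ ρ(𝓛^{Θ₂})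
    (RobinRegular sol γD γN Θ₂ z →
      N1 = N2.comp R12 ∧
      N1 - N2 = (N2.comp (Θ₂ - Θ₁)).comp N1 ∧
      R1m2.comp R21 = 1 - (2 : ℂ) • (Θ₂.comp N2)) := by
  have hi : R12 = 1 + (Θ₂ - Θ₁).comp N1 := h₁.ext fun u hu => by
    rw [hR12.apply_robin_trace h₁ hu, add_apply, one_apply_eq_self,
      ContinuousLinearMap.comp_apply, hN1.apply_robin_trace h₁ hu, sub_apply]
    abel
  refine ⟨hi, fun hD => hD.ext fun u hu => ?_, fun h₂ => ?_⟩
  · rw [ContinuousLinearMap.comp_apply, (hM1 hD).apply_dirichlet_trace hD hu,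
      (hM2 hD).apply_dirichlet_trace hD hu, hR12.apply_robin_trace h₁ hu]
  have hiii : N1 = N2.comp R12 := h₁.ext fun u hu => by
    rw [ContinuousLinearMap.comp_apply, hR12.apply_robin_trace h₁ hu,
      hN1.apply_robin_trace h₁ hu, (hN2 h₂).apply_robin_trace h₂ hu]
  refine ⟨hiii, ?_, h₂.ext fun u hu => ?_⟩
  · -- `N₁ = N₂ R₁₂ = N₂ (1 + (Θ₂ - Θ₁) N₁)` by (iii) and (i)
    conv_lhs => rw [hiii, hi]
    rw [ContinuousLinearMap.comp_add, ContinuousLinearMap.one_def, ContinuousLinearMap.comp_id,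
      add_sub_cancel_left, ContinuousLinearMap.comp_assoc]
  · rw [ContinuousLinearMap.comp_apply, (hR21 h₂).apply_robin_trace h₂ hu,
      hR1m2.apply_robin_trace h₁ hu, sub_apply, one_apply_eq_self, smul_apply,
      ContinuousLinearMap.comp_apply, (hN2 h₂).apply_robin_trace h₂ hu, neg_apply, two_smul]
    abel

end Evans
end
end
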